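/- arXiv:1810.08075 — 8 statements merged into one kernel-verified Lean document; each statement's English description precedes it below -/
import Mathlib

section
/- Let R be a ring and Δ ⊆ ℕ^p a non-empty co-ideal. If r = Σ_α r_α s^α ∈ R[[s]]_Δ has r_0 = 1, then its multiplicative inverse r* = Σ_α r*_α s^α is given by r*_0 = 1 and, for α ≠ 0, r*_α = Σ_{d=1}^{|α|} (-1)^d Σ_{(α^1,...,α^d) ∈ Par(α,d)} r_{α^1} ⋯ r_{α^d}, where Par(α,d) is the set of d-tuples of nonzero elements of ℕ^p summing to α. -/
open scoped Classical

def IsCoideal {p : ℕ} (Δ : Set (Fin p →₀ ℕ)) : Prop :=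
  Δ.Nonempty ∧ ∀ α ∈ Δ, ∀ β ≤ α, β ∈ Δ

def EqOnD {p : ℕ} {R : Type*} [Ring R] (Δ : Set (Fin p →₀ ℕ))
    (f g : MvPowerSeries (Fin p) R) : Prop :=
  ∀ α ∈ Δ, MvPowerSeries.coeff α f = MvPowerSeries.coeff α g

/-- `Par α d`: the set of `d`-tuples `(α^1, …, α^d)` of nonzero elements of `ℕ^p`
with `α^1 + ⋯ + α^d = α`. -/
noncomputable def Par {p : ℕ} (α : Fin p →₀ ℕ) (d : ℕ) :
    Finset (Fin d → (Fin p →₀ ℕ)) :=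
  (Fintype.piFinset (fun _ : Fin d => Finset.Iic α)).filter
    (fun f => (∀ i, f i ≠ 0) ∧ ∑ i, f i = α)

/-!
Comparing coefficients in `r * rs = 1` gives the recursion
`rs_α = -∑_{β + γ = α, β ≠ 0} r_β rs_γ` for `α ∈ Δ`, `α ≠ 0`. Splitting off the first part of
a tuple in `Par α (d + 1)` shows that the tuple sums `P(α, d)` satisfy
`P(α, d + 1) = ∑_{β + γ = α, β ≠ 0} r_β P(γ, d)`, so the alternating sums
`∑_d (-1)^d P(α, d)` obey the same recursion. Since `Δ` is closed downwards, strong induction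
on `|α|` identifies the two families.
-/

open MvPowerSeries Finset
open Finsupp (degree degree_eq_zero_iff degree_eq_sum)

lemma degree_lt_of_mem_erase_antidiagonal {σ : Type*} [DecidableEq σ] {α : σ →₀ ℕ}
    {b : (σ →₀ ℕ) × (σ →₀ ℕ)} (hb : b ∈ (antidiagonal α).erase (0, α)) :
    degree b.2 < degree α := by
  rw [mem_erase, HasAntidiagonal.mem_antidiagonal] at hb
  have hb₁ : degree b.1 ≠ 0 := (degree_eq_zero_iff _).not.mpr fun h =>
    hb.1 (Prod.ext h (by rw [← hb.2, h, zero_add]))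
  have := map_add degree b.1 b.2
  rw [hb.2] at this
  omega

section Partitions

variable {p : ℕ}

lemma mem_Par {α : Fin p →₀ ℕ} {d : ℕ} {f : Fin d → (Fin p →₀ ℕ)} :
    f ∈ Par α d ↔ (∀ i, f i ≠ 0) ∧ ∑ i, f i = α := by
  simp only [Par, mem_filter, Fintype.mem_piFinset, mem_Iic, and_iff_right_iff_imp]
  rintro ⟨-, rfl⟩ i
  exact single_le_sum (fun j _ => zero_le) (mem_univ i)

lemma Par_eq_empty_of_degree_lt {α : Fin p →₀ ℕ} {d : ℕ} (h : degree α < d) :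
    Par α d = ∅ := by
  refine eq_empty_of_forall_notMem fun f hf => ?_
  rw [mem_Par] at hf
  have : d ≤ degree α :=
    calc d = ∑ _i : Fin d, 1 := by simp
      _ ≤ ∑ i, degree (f i) := sum_le_sum fun i _ =>
          Nat.one_le_iff_ne_zero.mpr ((degree_eq_zero_iff _).not.mpr (hf.1 i))
      _ = degree α := by rw [← map_sum, hf.2]
  omega

lemma Par_zero_zero : Par (0 : Fin p →₀ ℕ) 0 = {Fin.elim0} := by
  ext f
  simp only [mem_Par, IsEmpty.forall_iff, univ_eq_empty, sum_empty, true_and,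
    mem_singleton]
  exact iff_of_true trivial (funext fun i => i.elim0)

lemma Par_zero_of_ne_zero {α : Fin p →₀ ℕ} (h : α ≠ 0) : Par α 0 = ∅ :=
  eq_empty_of_forall_notMem fun _ hf => h ((mem_Par.mp hf).2.symm.trans (sum_of_isEmpty _))

end Partitions

section TupleSums

variable {p : ℕ} {R : Type*} [Ring R]

noncomputable def parSum (r : MvPowerSeries (Fin p) R) (α : Fin p →₀ ℕ) (d : ℕ) : R :=
  ∑ f ∈ Par α d, (List.ofFn fun i => coeff (f i) r).prod

lemma parSum_zero_zero (r : MvPowerSeries (Fin p) R) : parSum r 0 0 = 1 := by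
  simp [parSum, Par_zero_zero]

lemma parSum_eq_zero_of_degree_lt (r : MvPowerSeries (Fin p) R) {α : Fin p →₀ ℕ} {d : ℕ}
    (h : degree α < d) : parSum r α d = 0 := by
  simp [parSum, Par_eq_empty_of_degree_lt h]

lemma parSum_zero_of_ne_zero (r : MvPowerSeries (Fin p) R) {α : Fin p →₀ ℕ} (h : α ≠ 0) :
    parSum r α 0 = 0 := by
  simp [parSum, Par_zero_of_ne_zero h]

lemma parSum_succ (r : MvPowerSeries (Fin p) R) (α : Fin p →₀ ℕ) (d : ℕ) :
    parSum r α (d + 1) =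
      ∑ b ∈ (antidiagonal α).erase (0, α), coeff b.1 r * parSum r b.2 d := by
  simp only [parSum, mul_sum]
  rw [sum_sigma']
  refine sum_bij' (fun f _ => ⟨(f 0, ∑ i : Fin d, f i.succ), Fin.tail f⟩)
    (fun x _ => Fin.cons x.1.1 x.2) ?_ ?_ ?_ ?_ ?_
  · intro f hf
    rw [mem_Par] at hf
    simp only [mem_sigma, mem_erase, HasAntidiagonal.mem_antidiagonal, ne_eq, Prod.ext_iff,
      not_and, mem_Par]
    refine ⟨⟨fun h => absurd h (hf.1 0), by rw [← hf.2, Fin.sum_univ_succ]⟩,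
      fun i => hf.1 i.succ, rfl⟩
  · rintro ⟨⟨β, γ⟩, f⟩ hx
    simp only [mem_sigma, mem_erase, HasAntidiagonal.mem_antidiagonal, ne_eq, Prod.ext_iff,
      not_and, mem_Par] at hx ⊢
    obtain ⟨⟨hne, hsum⟩, hf, rfl⟩ := hx
    refine ⟨fun i => ?_, ?_⟩
    · cases i using Fin.cases with
      | zero => simpa using fun hβ => hne hβ (by rw [← hsum, hβ, zero_add])
      | succ j => simpa using hf j
    rw [Fin.sum_univ_succ]
    simpa using hsum
  · intro f _
    simp
  · rintro ⟨⟨β, γ⟩, f⟩ hx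
    simp only [mem_sigma, mem_Par] at hx
    simp [hx.2.2]
  · intro f _
    rw [List.ofFn_succ, List.prod_cons]
    rfl

noncomputable def invCoeff (r : MvPowerSeries (Fin p) R) (α : Fin p →₀ ℕ) : R :=
  if α = 0 then 1 else ∑ d ∈ Icc 1 (degree α), (-1 : R) ^ d * parSum r α d

lemma invCoeff_eq_sum_range (r : MvPowerSeries (Fin p) R) {α : Fin p →₀ ℕ} {N : ℕ}
    (hN : degree α < N) :
    invCoeff r α = ∑ d ∈ range N, (-1 : R) ^ d * parSum r α d := by
  rw [invCoeff]
  split_ifs with hα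
  · subst hα
    rw [sum_eq_single_of_mem 0 (mem_range.mpr hN), pow_zero, one_mul, parSum_zero_zero]
    intro d _ hd
    rw [parSum_eq_zero_of_degree_lt r (by simpa using Nat.pos_of_ne_zero hd), mul_zero]
  · refine sum_subset (fun d hd => mem_range.mpr (by grind)) fun d _ hd => ?_
    rcases Nat.eq_zero_or_pos d with rfl | hd₀
    · rw [parSum_zero_of_ne_zero r hα, mul_zero]
    · rw [parSum_eq_zero_of_degree_lt r (by grind), mul_zero]

lemma invCoeff_eq_neg_sum (r : MvPowerSeries (Fin p) R) {α : Fin p →₀ ℕ} (hα : α ≠ 0) :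
    invCoeff r α = -∑ b ∈ (antidiagonal α).erase (0, α), coeff b.1 r * invCoeff r b.2 := by
  calc invCoeff r α
      = ∑ d ∈ range (degree α), (-1 : R) ^ (d + 1) * parSum r α (d + 1) := by
        rw [invCoeff_eq_sum_range r (Nat.lt_succ_self _), sum_range_succ',
          parSum_zero_of_ne_zero r hα, mul_zero, add_zero]
    _ = -∑ d ∈ range (degree α), ∑ b ∈ (antidiagonal α).erase (0, α),
          coeff b.1 r * ((-1 : R) ^ d * parSum r b.2 d) := by
        rw [← sum_neg_distrib]
        refine sum_congr rfl fun d _ => ?_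
        rw [parSum_succ, pow_succ, mul_assoc, neg_one_mul, mul_neg, mul_sum]
        congr 1
        exact sum_congr rfl fun b _ => ((Commute.neg_one_left _).pow_left d).left_comm _
    _ = -∑ b ∈ (antidiagonal α).erase (0, α), coeff b.1 r * invCoeff r b.2 := by
        rw [sum_comm]
        refine congrArg _ (sum_congr rfl fun b hb => ?_)
        rw [← mul_sum, invCoeff_eq_sum_range r (degree_lt_of_mem_erase_antidiagonal hb)]

end TupleSums

lemma coeff_zero_eq_one_of_coeff_mul_eq_one {σ R : Type*} [Ring R]
    {r rs : MvPowerSeries σ R} (hr0 : coeff 0 r = 1)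
    (h : coeff 0 (r * rs) = coeff 0 (1 : MvPowerSeries σ R)) :
    coeff 0 rs = 1 := by
  rwa [coeff_mul, Finsupp.antidiagonal_zero, sum_singleton, hr0, one_mul, coeff_zero_one] at h

lemma coeff_eq_neg_sum_of_coeff_mul_eq_one {σ R : Type*} [DecidableEq σ] [Ring R]
    {r rs : MvPowerSeries σ R} (hr0 : coeff 0 r = 1) {α : σ →₀ ℕ} (hα : α ≠ 0)
    (h : coeff α (r * rs) = coeff α 1) :
    coeff α rs = -∑ b ∈ (antidiagonal α).erase (0, α), coeff b.1 r * coeff b.2 rs := by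
  have h0α : ((0 : σ →₀ ℕ), α) ∈ antidiagonal α :=
    HasAntidiagonal.mem_antidiagonal.mpr (zero_add α)
  rw [coeff_mul, coeff_one, if_neg hα, ← add_sum_erase _ _ h0α, hr0, one_mul] at h
  exact eq_neg_of_add_eq_zero_left h

lemma coeff_eq_invCoeff {p : ℕ} {R : Type*} [Ring R] {Δ : Set (Fin p →₀ ℕ)}
    (hΔ : ∀ α ∈ Δ, ∀ β ≤ α, β ∈ Δ) {r rs : MvPowerSeries (Fin p) R}
    (hr0 : coeff 0 r = 1) (h1 : EqOnD Δ (r * rs) 1) {α : Fin p →₀ ℕ} (hα : α ∈ Δ) :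
    coeff α rs = invCoeff r α := by
  induction hn : degree α using Nat.strong_induction_on generalizing α with
  | _ n ih =>
    by_cases hα₀ : α = 0
    · subst hα₀
      rw [coeff_zero_eq_one_of_coeff_mul_eq_one hr0 (h1 0 hα), invCoeff, if_pos rfl]
    rw [coeff_eq_neg_sum_of_coeff_mul_eq_one hr0 hα₀ (h1 α hα), invCoeff_eq_neg_sum r hα₀]
    congr 1
    refine sum_congr rfl fun b hb => ?_
    have hb₂ : b.2 ≤ α :=
      (HasAntidiagonal.mem_antidiagonal.mp (mem_of_mem_erase hb)) ▸ le_add_self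
    rw [ih _ (hn ▸ degree_lt_of_mem_erase_antidiagonal hb) (hΔ α hα b.2 hb₂) rfl]

theorem inverse_coeff_formula_general {p : ℕ} {R : Type*} [Ring R]
    (Δ : Set (Fin p →₀ ℕ)) (hΔ : IsCoideal Δ)
    (r rs : MvPowerSeries (Fin p) R)
    (hr0 : MvPowerSeries.coeff 0 r = 1)
    (h1 : EqOnD Δ (r * rs) 1) :
    MvPowerSeries.coeff 0 rs = 1 ∧
      ∀ α ∈ Δ, α ≠ 0 →
        MvPowerSeries.coeff α rs =
          ∑ d ∈ Finset.Icc 1 (∑ i, α i),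
            (-1 : R) ^ d *
              ∑ f ∈ Par α d, (List.ofFn fun i => MvPowerSeries.coeff (f i) r).prod := by
  obtain ⟨⟨β, hβ⟩, hclosed⟩ := hΔ
  refine ⟨?_, fun α hα hα₀ => ?_⟩
  · rw [coeff_eq_invCoeff hclosed hr0 h1 (hclosed β hβ 0 zero_le), invCoeff, if_pos rfl]
  · rw [coeff_eq_invCoeff hclosed hr0 h1 hα, invCoeff, if_neg hα₀, degree_eq_sum]
    rfl

/-- If `r ∈ R[[s]]_Δ` has constant term `1` and `rs` is its (two-sided) inverse in
`R[[s]]_Δ`, then `rs` has constant term `1` and for `α ≠ 0`,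
`rs_α = Σ_{d=1}^{|α|} (-1)^d Σ_{(α^1,…,α^d) ∈ Par(α,d)} r_{α^1} ⋯ r_{α^d}`. -/
theorem inverse_coeff_formula {p : ℕ} {R : Type*} [Ring R]
    (Δ : Set (Fin p →₀ ℕ)) (hΔ : IsCoideal Δ)
    (r rs : MvPowerSeries (Fin p) R)
    (hr0 : MvPowerSeries.coeff 0 r = 1)
    (h1 : EqOnD Δ (r * rs) 1) (h2 : EqOnD Δ (rs * r) 1) :
    MvPowerSeries.coeff 0 rs = 1 ∧
      ∀ α ∈ Δ, α ≠ 0 →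
        MvPowerSeries.coeff α rs =
          ∑ d ∈ Finset.Icc 1 (∑ i, α i),
            (-1 : R) ^ d *
              ∑ f ∈ Par α d, (List.ofFn fun i => MvPowerSeries.coeff (f i) r).prod :=
  inverse_coeff_formula_general Δ hΔ r rs hr0 h1
end

section
/- Let 𝔡, 𝔡' be k-derivations of k[[s]]_Δ and r ∈ U^p(R;Δ). Then ε^{[𝔡,𝔡']}(r) = [ε^𝔡(r), ε^{𝔡'}(r)] + 𝔡_R(ε^{𝔡'}(r)) − 𝔡'_R(ε^𝔡(r)), where [·,·] denotes the commutator. -/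
/-! Agreement of coefficients on a lower set `Δ` is a ring congruence, and `d`, `d'` descend to
Leibniz maps `D`, `D'` on the quotient `R[[s]]_Δ`, in which `r` is a genuine unit with inverse `r*`.
There the identity is pure ring theory: differentiating `r* r = 1` gives `D r* = -r* (D r) r*`, and
expanding `D (r* D' r) - D' (r* D r)` by Leibniz leaves `r* (D D' - D' D) r` minus the commutator. -/

def IsLeibniz {A : Type*} [Mul A] [Add A] (D : A → A) : Prop :=
  ∀ x y, D (x * y) = D x * y + x * D y

namespace IsLeibniz

variable {A : Type*} [Ring A] {D D' : A → A}

theorem map_one (hD : IsLeibniz D) : D 1 = 0 := by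
  simpa using hD 1 1

theorem map_inverse (hD : IsLeibniz D) {u v : A} (hvu : v * u = 1) (huv : u * v = 1) :
    D v = -(v * D u * v) := by
  have hsum : D v * u + v * D u = 0 := by rw [← hD, hvu, hD.map_one]
  calc D v = (D v * u + v * D u) * v - v * D u * v := by noncomm_ring [mul_assoc, huv]
    _ = -(v * D u * v) := by rw [hsum, zero_mul, zero_sub]

theorem mul_commutator_apply (hD : IsLeibniz D) (hD' : IsLeibniz D') {u v : A}
    (hvu : v * u = 1) (huv : u * v = 1) :
    v * (D (D' u) - D' (D u)) =
      (v * D u) * (v * D' u) - (v * D' u) * (v * D u) + D (v * D' u) - D' (v * D u) := by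
  rw [hD, hD', hD.map_inverse hvu huv, hD'.map_inverse hvu huv]
  noncomm_ring

end IsLeibniz

theorem IsCoideal.isLowerSet {p : ℕ} {Δ : Set (Fin p →₀ ℕ)} (hΔ : IsCoideal Δ) : IsLowerSet Δ :=
  fun α β hβα hα => hΔ.2 α hα β hβα

def RingCon.liftMap {A : Type*} [Ring A] (c : RingCon A) (d : A → A)
    (hd : ∀ x y, c x y → c (d x) (d y)) : c.Quotient → c.Quotient :=
  Quotient.map' d hd

theorem RingCon.isLeibniz_liftMap {A : Type*} [Ring A] (c : RingCon A) {d : A → A}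
    (hd : ∀ x y, c x y → c (d x) (d y)) (hleib : ∀ x y, c (d (x * y)) (d x * y + x * d y)) :
    IsLeibniz (c.liftMap d hd) := by
  intro x y
  induction x using Quotient.inductionOn' with | h x => ?_
  induction y using Quotient.inductionOn' with | h y => ?_
  exact c.eq.2 (hleib x y)

section EqOnD

variable {p : ℕ} {R : Type*} [Ring R] {Δ : Set (Fin p →₀ ℕ)}

theorem EqOnD.mul (hΔ : IsLowerSet Δ) {f f' g g' : MvPowerSeries (Fin p) R}
    (hf : EqOnD Δ f f') (hg : EqOnD Δ g g') : EqOnD Δ (f * g) (f' * g') := by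
  intro α hα
  simp only [MvPowerSeries.coeff_mul]
  refine Finset.sum_congr rfl fun x hx => ?_
  rw [Finset.HasAntidiagonal.mem_antidiagonal] at hx
  rw [hf x.1 (hΔ (hx ▸ le_self_add) hα), hg x.2 (hΔ (hx ▸ le_add_self) hα)]

variable (R) in
def eqOnDRingCon (hΔ : IsLowerSet Δ) : RingCon (MvPowerSeries (Fin p) R) where
  r := EqOnD Δ
  iseqv :=
    { refl := fun _ _ _ => rfl
      symm := fun h α hα => (h α hα).symm
      trans := fun h h' α hα => (h α hα).trans (h' α hα) }
  add' h h' α hα := by simp only [map_add, h α hα, h' α hα]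
  mul' := EqOnD.mul hΔ

end EqOnD

theorem eps_commutator_general {p : ℕ} {R : Type*} [Ring R]
    (Δ : Set (Fin p →₀ ℕ)) (hΔ : IsCoideal Δ)
    (d d' : MvPowerSeries (Fin p) R → MvPowerSeries (Fin p) R)
    (hleib : ∀ f g, EqOnD Δ (d (f * g)) (d f * g + f * d g))
    (hleib' : ∀ f g, EqOnD Δ (d' (f * g)) (d' f * g + f * d' g))
    (hcong : ∀ f g, EqOnD Δ f g → EqOnD Δ (d f) (d g))
    (hcong' : ∀ f g, EqOnD Δ f g → EqOnD Δ (d' f) (d' g))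
    (r rs : MvPowerSeries (Fin p) R)
    (hr1 : EqOnD Δ (r * rs) 1) (hr2 : EqOnD Δ (rs * r) 1) :
    EqOnD Δ (rs * (d (d' r) - d' (d r)))
      ((rs * d r) * (rs * d' r) - (rs * d' r) * (rs * d r)
        + d (rs * d' r) - d' (rs * d r)) := by
  let c := eqOnDRingCon R hΔ.isLowerSet
  -- The coercion to `c.Quotient` commutes with `liftMap` and the ring operations by `rfl`.
  exact c.eq.1 <| IsLeibniz.mul_commutator_apply (c.isLeibniz_liftMap hcong hleib)
    (c.isLeibniz_liftMap hcong' hleib') (u := r) (v := rs) (c.eq.2 hr2) (c.eq.2 hr1)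

/-- For `k`-derivations `𝔡, 𝔡'` of `k[[s]]_Δ` (modelled by their induced maps `d, d'` on
`R[[s]]_Δ`) and `r ∈ U^p(R;Δ)` with inverse `rs`:
`ε^{[𝔡,𝔡']}(r) = [ε^𝔡(r), ε^{𝔡'}(r)] + 𝔡_R(ε^{𝔡'}(r)) − 𝔡'_R(ε^𝔡(r))`,
where `ε^𝔡(r) = r* 𝔡_R(r)` and `[𝔡,𝔡'] = 𝔡∘𝔡' − 𝔡'∘𝔡`. -/
theorem eps_commutator {p : ℕ} {k R : Type*} [CommRing k] [Ring R] [Algebra k R]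
    (Δ : Set (Fin p →₀ ℕ)) (hΔ : IsCoideal Δ)
    (d d' : MvPowerSeries (Fin p) R → MvPowerSeries (Fin p) R)
    (hadd : ∀ f g, d (f + g) = d f + d g)
    (hadd' : ∀ f g, d' (f + g) = d' f + d' g)
    (hleib : ∀ f g, EqOnD Δ (d (f * g)) (d f * g + f * d g))
    (hleib' : ∀ f g, EqOnD Δ (d' (f * g)) (d' f * g + f * d' g))
    (hcong : ∀ f g, EqOnD Δ f g → EqOnD Δ (d f) (d g))
    (hcong' : ∀ f g, EqOnD Δ f g → EqOnD Δ (d' f) (d' g))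
    (r rs : MvPowerSeries (Fin p) R)
    (hr0 : MvPowerSeries.coeff 0 r = 1)
    (hr1 : EqOnD Δ (r * rs) 1) (hr2 : EqOnD Δ (rs * r) 1) :
    EqOnD Δ (rs * (d (d' r) - d' (d r)))
      ((rs * d r) * (rs * d' r) - (rs * d' r) * (rs * d r)
        + d (rs * d' r) - d' (rs * d r)) :=
  eps_commutator_general Δ hΔ d d' hleib hleib' hcong hcong' r rs hr1 hr2
end

section
/- For each i = 1,...,p let χ^i = s_i ∂/∂s_i be the i-th partial Euler derivation of k[[s]]_Δ, and let ε^i(r) = r* χ^i_R(r) for r ∈ U^p(R;Δ). Then for all i, j = 1,...,p: χ^j_R(ε^i(r)) − χ^i_R(ε^j(r)) = [ε^i(r), ε^j(r)]. -/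
/-- The `i`-th partial Euler derivation `χ^i = s_i ∂/∂s_i`, acting coefficientwise on
`R[[s]]` by multiplying the coefficient of `s^α` by `α_i`. -/
noncomputable def chi {p : ℕ} {R : Type*} [Ring R] (i : Fin p)
    (f : MvPowerSeries (Fin p) R) : MvPowerSeries (Fin p) R :=
  fun α => (α i) • MvPowerSeries.coeff α f

open MvPowerSeries

section Chi

variable {p : ℕ} {R : Type*} [Ring R]

lemma coeff_chi (i : Fin p) (f : MvPowerSeries (Fin p) R) (α : Fin p →₀ ℕ) :
    coeff α (chi i f) = α i • coeff α f := rfl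

lemma chi_one (i : Fin p) : chi i (1 : MvPowerSeries (Fin p) R) = 0 := by
  ext α
  rw [coeff_chi, coeff_one]
  by_cases h : α = 0 <;> simp [h]

lemma chi_mul (i : Fin p) (f g : MvPowerSeries (Fin p) R) :
    chi i (f * g) = chi i f * g + f * chi i g := by
  ext α
  rw [coeff_chi, map_add, coeff_mul, coeff_mul, coeff_mul, Finset.smul_sum,
    ← Finset.sum_add_distrib]
  refine Finset.sum_congr rfl fun x hx => ?_
  rw [Finset.HasAntidiagonal.mem_antidiagonal] at hx
  rw [coeff_chi, coeff_chi, smul_mul_assoc, mul_smul_comm, ← hx, Finsupp.add_apply, add_smul]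

lemma chi_comm (i j : Fin p) (f : MvPowerSeries (Fin p) R) :
    chi j (chi i f) = chi i (chi j f) := by
  ext α
  simp only [coeff_chi, smul_smul, mul_comm]

end Chi

namespace EqOnD

variable {p : ℕ} {R : Type*} [Ring R] {Δ : Set (Fin p →₀ ℕ)}
  {f g f' g' : MvPowerSeries (Fin p) R}

lemma refl (f : MvPowerSeries (Fin p) R) : EqOnD Δ f f := fun _ _ => rfl

lemma symm (h : EqOnD Δ f g) : EqOnD Δ g f := fun α hα => (h α hα).symm

lemma trans (h : EqOnD Δ f g) (h' : EqOnD Δ g f') : EqOnD Δ f f' :=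
  fun α hα => (h α hα).trans (h' α hα)

instance : @Trans (MvPowerSeries (Fin p) R) _ _ (EqOnD Δ) (EqOnD Δ) (EqOnD Δ) := ⟨trans⟩

lemma sub (h : EqOnD Δ f g) (h' : EqOnD Δ f' g') : EqOnD Δ (f - f') (g - g') :=
  fun α hα => by rw [map_sub, map_sub, h α hα, h' α hα]

lemma chi (h : EqOnD Δ f g) (i : Fin p) : EqOnD Δ (chi i f) (chi i g) :=
  fun α hα => by rw [coeff_chi, coeff_chi, h α hα]

lemma mul_s5 (hΔ : IsCoideal Δ) (h : EqOnD Δ f g) (h' : EqOnD Δ f' g') :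
    EqOnD Δ (f * f') (g * g') := by
  intro α hα
  rw [coeff_mul, coeff_mul]
  refine Finset.sum_congr rfl fun x hx => ?_
  rw [Finset.HasAntidiagonal.mem_antidiagonal] at hx
  rw [h x.1 (hΔ.2 α hα x.1 (hx ▸ le_self_add)), h' x.2 (hΔ.2 α hα x.2 (hx ▸ le_add_self))]

end EqOnD

lemma eqOnD_chi_of_inverse {p : ℕ} {R : Type*} [Ring R] {Δ : Set (Fin p →₀ ℕ)}
    (hΔ : IsCoideal Δ) {r rs : MvPowerSeries (Fin p) R}
    (hr1 : EqOnD Δ (r * rs) 1) (hr2 : EqOnD Δ (rs * r) 1) (m : Fin p) :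
    EqOnD Δ (chi m rs) (-(rs * chi m r * rs)) := by
  have hleibniz : EqOnD Δ (chi m rs * r + rs * chi m r) 0 := by
    simpa only [chi_mul, chi_one] using hr2.chi m
  have hleft : EqOnD Δ (chi m rs * r) (-(rs * chi m r)) := by
    simpa only [add_sub_cancel_right, zero_sub] using hleibniz.sub (.refl (rs * chi m r))
  calc chi m rs = chi m rs * 1 := (mul_one _).symm
    EqOnD Δ _ (chi m rs * (r * rs)) := (EqOnD.refl _).mul_s5 hΔ hr1.symm
    _ = chi m rs * r * rs := (mul_assoc _ _ _).symm
    EqOnD Δ _ (-(rs * chi m r) * rs) := hleft.mul_s5 hΔ (.refl rs)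
    _ = -(rs * chi m r * rs) := neg_mul _ _

theorem chi_eps_crossed_general {p : ℕ} {R : Type*} [Ring R]
    (Δ : Set (Fin p →₀ ℕ)) (hΔ : IsCoideal Δ)
    (r rs : MvPowerSeries (Fin p) R)
    (hr1 : EqOnD Δ (r * rs) 1) (hr2 : EqOnD Δ (rs * r) 1)
    (i j : Fin p) :
    EqOnD Δ (chi j (rs * chi i r) - chi i (rs * chi j r))
      ((rs * chi i r) * (rs * chi j r) - (rs * chi j r) * (rs * chi i r)) := by
  have hχ := eqOnD_chi_of_inverse hΔ hr1 hr2
  calc chi j (rs * chi i r) - chi i (rs * chi j r)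
        = chi j rs * chi i r - chi i rs * chi j r := by
          rw [chi_mul, chi_mul, chi_comm i j]; abel
    EqOnD Δ _ (-(rs * chi j r * rs) * chi i r - -(rs * chi i r * rs) * chi j r) :=
          ((hχ j).mul_s5 hΔ (.refl _)).sub ((hχ i).mul_s5 hΔ (.refl _))
    _ = (rs * chi i r) * (rs * chi j r) - (rs * chi j r) * (rs * chi i r) := by noncomm_ring

/-- With `ε^i(r) = r* χ^i_R(r)`: `χ^j_R(ε^i(r)) − χ^i_R(ε^j(r)) = [ε^i(r), ε^j(r)]`. -/
theorem chi_eps_crossed {p : ℕ} {k R : Type*} [CommRing k] [Ring R] [Algebra k R]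
    (Δ : Set (Fin p →₀ ℕ)) (hΔ : IsCoideal Δ)
    (r rs : MvPowerSeries (Fin p) R)
    (hr0 : MvPowerSeries.coeff 0 r = 1)
    (hr1 : EqOnD Δ (r * rs) 1) (hr2 : EqOnD Δ (rs * r) 1)
    (i j : Fin p) :
    EqOnD Δ (chi j (rs * chi i r) - chi i (rs * chi j r))
      ((rs * chi i r) * (rs * chi j r) - (rs * chi j r) * (rs * chi i r)) :=
  chi_eps_crossed_general Δ hΔ r rs hr1 hr2 i j
end

section
/- Let r ∈ U^p(R;Δ) and write ε^i(r) = Σ_α ε^i_α(r) s^α. Then for all α ∈ Δ with α_i > 0 the recursive identity α_i r_α = Σ_{β+γ=α, γ_i>0} r_β ε^i_γ(r) holds, and symmetrically α_i r_α = Σ_{β+γ=α, γ_i>0} ε̄^i_γ(r) r_β for the conjugate version ε̄^i(r) = χ^i_R(r) r*. -/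
/-!
`χ^i r` has no coefficients with `γ_i = 0`, hence neither has `r* χ^i r`, so the filtered sum
is the full coefficient `(r · r* χ^i r)_α = (r r* · χ^i r)_α`. Since `Δ` is a co-ideal, `r r*`
agrees with `1` at every `β ≤ α`, which leaves `(χ^i r)_α = α_i r_α`. The conjugate identity is
the mirror image.
-/

open MvPowerSeries Finset

namespace MvPowerSeries

section

variable {σ R : Type*} [Semiring R]

theorem coeff_mul_eq_of_coeff_eq_one_left {u : MvPowerSeries σ R} {α : σ →₀ ℕ}
    (hu : ∀ β ≤ α, coeff β u = coeff β 1) (f : MvPowerSeries σ R) :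
    coeff α (u * f) = coeff α f := by
  classical
  conv_rhs => rw [← one_mul f]
  simp only [coeff_mul]
  refine sum_congr rfl fun x hx => ?_
  rw [hu x.1 (mem_antidiagonal.mp hx ▸ le_self_add)]

theorem coeff_mul_eq_of_coeff_eq_one_right {u : MvPowerSeries σ R} {α : σ →₀ ℕ}
    (hu : ∀ β ≤ α, coeff β u = coeff β 1) (f : MvPowerSeries σ R) :
    coeff α (f * u) = coeff α f := by
  classical
  conv_rhs => rw [← mul_one f]
  simp only [coeff_mul]
  refine sum_congr rfl fun x hx => ?_
  rw [hu x.2 (mem_antidiagonal.mp hx ▸ le_add_self)]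

variable {i : σ} {g : MvPowerSeries σ R} (hg : ∀ γ : σ →₀ ℕ, γ i = 0 → coeff γ g = 0)
include hg

theorem coeff_mul_eq_zero_of_right (f : MvPowerSeries σ R) (γ : σ →₀ ℕ) (hγ : γ i = 0) :
    coeff γ (f * g) = 0 := by
  classical
  rw [coeff_mul]
  refine sum_eq_zero fun x hx => ?_
  have : x.1 i + x.2 i = γ i := by rw [← mem_antidiagonal.mp hx]; rfl
  rw [hg x.2 (by omega), mul_zero]

theorem coeff_mul_eq_zero_of_left (f : MvPowerSeries σ R) (γ : σ →₀ ℕ) (hγ : γ i = 0) :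
    coeff γ (g * f) = 0 := by
  classical
  rw [coeff_mul]
  refine sum_eq_zero fun x hx => ?_
  have : x.1 i + x.2 i = γ i := by rw [← mem_antidiagonal.mp hx]; rfl
  rw [hg x.1 (by omega), zero_mul]

theorem sum_filter_antidiagonal_eq_coeff_mul_right [DecidableEq σ] (f : MvPowerSeries σ R)
    (α : σ →₀ ℕ) :
    ∑ x ∈ (antidiagonal α).filter (fun x => x.2 i ≠ 0), coeff x.1 f * coeff x.2 g =
      coeff α (f * g) := by
  rw [coeff_mul]
  refine sum_filter_of_ne fun x _ hx => ?_
  contrapose! hx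
  rw [hg x.2 hx, mul_zero]

theorem sum_filter_antidiagonal_eq_coeff_mul_left [DecidableEq σ] (f : MvPowerSeries σ R)
    (α : σ →₀ ℕ) :
    ∑ x ∈ (antidiagonal α).filter (fun x => x.2 i ≠ 0), coeff x.2 g * coeff x.1 f =
      coeff α (g * f) := by
  rw [coeff_mul, sum_filter,
    Finsupp.sum_antidiagonal_swap α fun a b => if b i ≠ 0 then coeff b g * coeff a f else 0]
  refine sum_congr rfl fun x _ => ite_eq_left_iff.mpr fun hx => ?_
  rw [hg x.1 (not_not.mp hx), zero_mul]

end

end MvPowerSeries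

theorem coeff_chi_of_apply_eq_zero {p : ℕ} {R : Type*} [Ring R] {i : Fin p}
    (f : MvPowerSeries (Fin p) R) (γ : Fin p →₀ ℕ) (hγ : γ i = 0) : coeff γ (chi i f) = 0 := by
  change (γ i) • coeff γ f = 0
  rw [hγ, zero_smul]

theorem eps_recursive_general {p : ℕ} {R : Type*} [Ring R]
    (Δ : Set (Fin p →₀ ℕ)) (hΔ : IsCoideal Δ)
    (r rs : MvPowerSeries (Fin p) R)
    (hr1 : EqOnD Δ (r * rs) 1) (hr2 : EqOnD Δ (rs * r) 1)
    (i : Fin p) :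
    ∀ α ∈ Δ, α i ≠ 0 →
      ((α i) • MvPowerSeries.coeff α r =
          ∑ x ∈ (Finset.HasAntidiagonal.antidiagonal α).filter (fun x => x.2 i ≠ 0),
            MvPowerSeries.coeff x.1 r * MvPowerSeries.coeff x.2 (rs * chi i r)) ∧
      ((α i) • MvPowerSeries.coeff α r =
          ∑ x ∈ (Finset.HasAntidiagonal.antidiagonal α).filter (fun x => x.2 i ≠ 0),
            MvPowerSeries.coeff x.2 (chi i r * rs) * MvPowerSeries.coeff x.1 r) := by
  intro α hα _
  have hchi := coeff_chi_of_apply_eq_zero (i := i) r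
  have hr1α : ∀ β ≤ α, coeff β (r * rs) = coeff β 1 := fun β hβ => hr1 β (hΔ.2 α hα β hβ)
  have hr2α : ∀ β ≤ α, coeff β (rs * r) = coeff β 1 := fun β hβ => hr2 β (hΔ.2 α hα β hβ)
  constructor
  · rw [sum_filter_antidiagonal_eq_coeff_mul_right (coeff_mul_eq_zero_of_right hchi rs),
      ← mul_assoc, coeff_mul_eq_of_coeff_eq_one_left hr1α]
    rfl
  · rw [sum_filter_antidiagonal_eq_coeff_mul_left (coeff_mul_eq_zero_of_left hchi rs),
      mul_assoc, coeff_mul_eq_of_coeff_eq_one_right hr2α]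
    rfl

/-- For `r ∈ U^p(R;Δ)` with inverse `rs`, `ε^i(r) = r* χ^i_R(r)` and
`ε̄^i(r) = χ^i_R(r) r*`, one has, for `α ∈ Δ` with `α_i > 0`:
`α_i r_α = Σ_{β+γ=α, γ_i>0} r_β ε^i_γ(r) = Σ_{β+γ=α, γ_i>0} ε̄^i_γ(r) r_β`. -/
theorem eps_recursive {p : ℕ} {k R : Type*} [CommRing k] [Ring R] [Algebra k R]
    (Δ : Set (Fin p →₀ ℕ)) (hΔ : IsCoideal Δ)
    (r rs : MvPowerSeries (Fin p) R)
    (hr0 : MvPowerSeries.coeff 0 r = 1)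
    (hr1 : EqOnD Δ (r * rs) 1) (hr2 : EqOnD Δ (rs * r) 1)
    (i : Fin p) :
    ∀ α ∈ Δ, α i ≠ 0 →
      ((α i) • MvPowerSeries.coeff α r =
          ∑ x ∈ (Finset.HasAntidiagonal.antidiagonal α).filter (fun x => x.2 i ≠ 0),
            MvPowerSeries.coeff x.1 r * MvPowerSeries.coeff x.2 (rs * chi i r)) ∧
      ((α i) • MvPowerSeries.coeff α r =
          ∑ x ∈ (Finset.HasAntidiagonal.antidiagonal α).filter (fun x => x.2 i ≠ 0),
            MvPowerSeries.coeff x.2 (chi i r * rs) * MvPowerSeries.coeff x.1 r) :=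
  eps_recursive_general Δ hΔ r rs hr1 hr2 i
end

section
/- For a 1-variate Hasse–Schmidt derivation D = (Id, D_1, D_2, D_3, ...) of A over k, the first components of the logarithmic derivative ε(D) = D* χ_R(D) are: ε_1(D) = D_1, ε_2(D) = 2D_2 − D_1², and ε_3(D) = 3D_3 − 2D_1D_2 − D_2D_1 + D_1³; in particular all three of these operators are k-derivations of A. -/
/-- The Euler derivation `χ = s d/ds` on `R[[s]]`. -/
noncomputable def chi1 {R : Type*} [Ring R] (f : PowerSeries R) : PowerSeries R :=
  PowerSeries.mk fun n => n • PowerSeries.coeff (R := R) n f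

/-! Comparing coefficients in `D* D = 1` up to order 2 gives `D*_1 = -D_1` and
`D*_2 = D_1² - D_2`; substituting these into `D* χ(D)` yields the three formulas. In the
derivation property the cross terms `D_i x * D_j y` produced by the Leibniz rules of `D_1, D_2, D_3`
cancel. -/

open PowerSeries Finset

namespace PowerSeries

variable {R : Type*} [Ring R] {f g : PowerSeries R}

theorem coeff_mul_chi1 (f g : PowerSeries R) (n : ℕ) :
    coeff n (g * chi1 f) = ∑ i ∈ range (n + 1), coeff i g * ((n - i) • coeff (n - i) f) := by
  rw [coeff_mul, Nat.sum_antidiagonal_eq_sum_range_succ_mk]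
  simp only [chi1, coeff_mk]

theorem coeff_one_eq_neg_of_coeff_one_mul_eq_zero (hf : coeff 0 f = 1) (hg : coeff 0 g = 1)
    (h₁ : coeff 1 (g * f) = 0) : coeff 1 g = -coeff 1 f := by
  rw [coeff_mul, Nat.sum_antidiagonal_eq_sum_range_succ_mk] at h₁
  simp only [sum_range_succ, sum_range_zero, zero_add, Nat.sub_self, Nat.sub_zero, hf, hg,
    mul_one, one_mul] at h₁
  exact eq_neg_of_add_eq_zero_right h₁

theorem coeff_two_eq_of_coeff_mul_eq_zero (hf : coeff 0 f = 1) (hg : coeff 0 g = 1)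
    (h₁ : coeff 1 (g * f) = 0) (h₂ : coeff 2 (g * f) = 0) :
    coeff 2 g = coeff 1 f * coeff 1 f - coeff 2 f := by
  have hg₁ := coeff_one_eq_neg_of_coeff_one_mul_eq_zero hf hg h₁
  rw [coeff_mul, Nat.sum_antidiagonal_eq_sum_range_succ_mk] at h₂
  simp only [sum_range_succ, sum_range_zero, zero_add, hf, hg, hg₁, mul_one, one_mul] at h₂
  rw [eq_sub_iff_add_eq, ← sub_eq_zero, ← h₂]
  noncomm_ring

theorem coeff_one_mul_chi1 (hg : coeff 0 g = 1) : coeff 1 (g * chi1 f) = coeff 1 f := by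
  simp [coeff_mul_chi1, sum_range_succ, hg]

theorem coeff_two_mul_chi1 (hg₀ : coeff 0 g = 1) (hg₁ : coeff 1 g = -coeff 1 f) :
    coeff 2 (g * chi1 f) = 2 • coeff 2 f - coeff 1 f * coeff 1 f := by
  simp only [coeff_mul_chi1, sum_range_succ, sum_range_zero, zero_add, Nat.reduceSub, hg₀, hg₁,
    Nat.sub_self, zero_smul, mul_zero, add_zero]
  noncomm_ring

theorem coeff_three_mul_chi1 (hg₀ : coeff 0 g = 1) (hg₁ : coeff 1 g = -coeff 1 f)
    (hg₂ : coeff 2 g = coeff 1 f * coeff 1 f - coeff 2 f) :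
    coeff 3 (g * chi1 f) = 3 • coeff 3 f - 2 • (coeff 1 f * coeff 2 f) - coeff 2 f * coeff 1 f +
      coeff 1 f * coeff 1 f * coeff 1 f := by
  simp only [coeff_mul_chi1, sum_range_succ, sum_range_zero, zero_add, Nat.reduceSub, hg₀, hg₁,
    hg₂, Nat.sub_self, zero_smul, mul_zero, add_zero]
  noncomm_ring

section Leibniz

variable {k A : Type*} [Semiring k] [CommRing A] [Module k A] {D : PowerSeries (Module.End k A)}

theorem coeff_one_apply_mul (hD₀ : coeff 0 D = 1)
    (h : ∀ x y : A, coeff 1 D (x * y) = ∑ p ∈ antidiagonal 1, coeff p.1 D x * coeff p.2 D y)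
    (x y : A) : coeff 1 D (x * y) = coeff 1 D x * y + x * coeff 1 D y := by
  rw [h, Nat.sum_antidiagonal_eq_sum_range_succ_mk]
  simp only [sum_range_succ, sum_range_zero, zero_add, Nat.sub_self, hD₀, Module.End.one_apply]
  ring

theorem coeff_two_apply_mul (hD₀ : coeff 0 D = 1)
    (h : ∀ x y : A, coeff 2 D (x * y) = ∑ p ∈ antidiagonal 2, coeff p.1 D x * coeff p.2 D y)
    (x y : A) :
    coeff 2 D (x * y) = coeff 2 D x * y + coeff 1 D x * coeff 1 D y + x * coeff 2 D y := by
  rw [h, Nat.sum_antidiagonal_eq_sum_range_succ_mk]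
  simp only [sum_range_succ, sum_range_zero, zero_add, Nat.reduceSub, Nat.sub_self, hD₀,
    Module.End.one_apply]
  ring

theorem coeff_three_apply_mul (hD₀ : coeff 0 D = 1)
    (h : ∀ x y : A, coeff 3 D (x * y) = ∑ p ∈ antidiagonal 3, coeff p.1 D x * coeff p.2 D y)
    (x y : A) :
    coeff 3 D (x * y) = coeff 3 D x * y + coeff 2 D x * coeff 1 D y + coeff 1 D x * coeff 2 D y +
      x * coeff 3 D y := by
  rw [h, Nat.sum_antidiagonal_eq_sum_range_succ_mk]
  simp only [sum_range_succ, sum_range_zero, zero_add, Nat.reduceSub, Nat.sub_self, hD₀,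
    Module.End.one_apply]
  ring

end Leibniz

end PowerSeries

namespace Module.End

variable {k A : Type*} [Semiring k] [CommRing A] [Module k A] {D₁ D₂ D₃ : Module.End k A}

theorem two_nsmul_sub_mul_self_apply_mul
    (h₁ : ∀ x y, D₁ (x * y) = D₁ x * y + x * D₁ y)
    (h₂ : ∀ x y, D₂ (x * y) = D₂ x * y + D₁ x * D₁ y + x * D₂ y) (x y : A) :
    (2 • D₂ - D₁ * D₁) (x * y) =
      x * (2 • D₂ - D₁ * D₁) y + (2 • D₂ - D₁ * D₁) x * y := by
  simp only [LinearMap.sub_apply, LinearMap.smul_apply, mul_apply, h₁, h₂, map_add]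
  simp only [nsmul_eq_mul]
  ring

theorem three_nsmul_sub_apply_mul
    (h₁ : ∀ x y, D₁ (x * y) = D₁ x * y + x * D₁ y)
    (h₂ : ∀ x y, D₂ (x * y) = D₂ x * y + D₁ x * D₁ y + x * D₂ y)
    (h₃ : ∀ x y, D₃ (x * y) = D₃ x * y + D₂ x * D₁ y + D₁ x * D₂ y + x * D₃ y)
    (x y : A) :
    (3 • D₃ - 2 • (D₁ * D₂) - D₂ * D₁ + D₁ * D₁ * D₁) (x * y) =
      x * (3 • D₃ - 2 • (D₁ * D₂) - D₂ * D₁ + D₁ * D₁ * D₁) y +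
        (3 • D₃ - 2 • (D₁ * D₂) - D₂ * D₁ + D₁ * D₁ * D₁) x * y := by
  simp only [LinearMap.sub_apply, LinearMap.add_apply, LinearMap.smul_apply, mul_apply, h₁, h₂,
    h₃, map_add]
  simp only [nsmul_eq_mul]
  ring

end Module.End

theorem eps_low_components_general {k A : Type*} [CommRing k] [CommRing A] [Algebra k A]
    (m : ℕ) (hm : 3 ≤ m)
    (D Ds : PowerSeries (Module.End k A))
    (hD0 : PowerSeries.coeff (R := Module.End k A) 0 D = 1)
    (hDs0 : PowerSeries.coeff (R := Module.End k A) 0 Ds = 1)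
    (hLeib : ∀ n ≤ m, ∀ x y : A,
      PowerSeries.coeff (R := Module.End k A) n D (x * y) =
        ∑ z ∈ Finset.HasAntidiagonal.antidiagonal n,
          (PowerSeries.coeff (R := Module.End k A) z.1 D x) *
            (PowerSeries.coeff (R := Module.End k A) z.2 D y))
    (hinv2 : ∀ n ≤ m, PowerSeries.coeff (R := Module.End k A) n (Ds * D) =
      PowerSeries.coeff (R := Module.End k A) n 1) :
    (PowerSeries.coeff (R := Module.End k A) 1 (Ds * chi1 D) =
        PowerSeries.coeff (R := Module.End k A) 1 D) ∧
    (PowerSeries.coeff (R := Module.End k A) 2 (Ds * chi1 D) =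
        2 • PowerSeries.coeff (R := Module.End k A) 2 D -
          PowerSeries.coeff (R := Module.End k A) 1 D *
            PowerSeries.coeff (R := Module.End k A) 1 D) ∧
    (PowerSeries.coeff (R := Module.End k A) 3 (Ds * chi1 D) =
        3 • PowerSeries.coeff (R := Module.End k A) 3 D -
          2 • (PowerSeries.coeff (R := Module.End k A) 1 D *
            PowerSeries.coeff (R := Module.End k A) 2 D) -
          PowerSeries.coeff (R := Module.End k A) 2 D *
            PowerSeries.coeff (R := Module.End k A) 1 D +
          PowerSeries.coeff (R := Module.End k A) 1 D *
            PowerSeries.coeff (R := Module.End k A) 1 D *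
            PowerSeries.coeff (R := Module.End k A) 1 D) ∧
    (∀ n : ℕ, n = 1 ∨ n = 2 ∨ n = 3 → ∀ x y : A,
        PowerSeries.coeff (R := Module.End k A) n (Ds * chi1 D) (x * y) =
          x * PowerSeries.coeff (R := Module.End k A) n (Ds * chi1 D) y +
            PowerSeries.coeff (R := Module.End k A) n (Ds * chi1 D) x * y) := by
  have hDs₁ := coeff_one_eq_neg_of_coeff_one_mul_eq_zero hD0 hDs0
    (by simpa using hinv2 1 (by omega))
  have hDs₂ := coeff_two_eq_of_coeff_mul_eq_zero hD0 hDs0 (by simpa using hinv2 1 (by omega))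
    (by simpa using hinv2 2 (by omega))
  have hε₁ := coeff_one_mul_chi1 (f := D) hDs0
  have hε₂ := coeff_two_mul_chi1 hDs0 hDs₁
  have hε₃ := coeff_three_mul_chi1 hDs0 hDs₁ hDs₂
  have hD₁ := coeff_one_apply_mul hD0 (hLeib 1 (by omega))
  have hD₂ := coeff_two_apply_mul hD0 (hLeib 2 (by omega))
  have hD₃ := coeff_three_apply_mul hD0 (hLeib 3 (by omega))
  refine ⟨hε₁, hε₂, hε₃, ?_⟩
  rintro n (rfl | rfl | rfl) x y
  · rw [hε₁, hD₁, add_comm, mul_comm]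
  · rw [hε₂]
    exact Module.End.two_nsmul_sub_mul_self_apply_mul hD₁ hD₂ x y
  · rw [hε₃]
    exact Module.End.three_nsmul_sub_apply_mul hD₁ hD₂ hD₃ x y

/-- For a 1-variate Hasse–Schmidt derivation `D = (Id, D_1, D_2, D_3, …)` of length
`m ≥ 3` with inverse `D* = Ds`, the first components of `ε(D) = D* χ_R(D)` are
`ε_1(D) = D_1`, `ε_2(D) = 2D_2 − D_1²`,
`ε_3(D) = 3D_3 − 2D_1D_2 − D_2D_1 + D_1³`, and all three are `k`-derivations of `A`. -/
theorem eps_low_components {k A : Type*} [CommRing k] [CommRing A] [Algebra k A]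
    (m : ℕ) (hm : 3 ≤ m)
    (D Ds : PowerSeries (Module.End k A))
    (hD0 : PowerSeries.coeff (R := Module.End k A) 0 D = 1)
    (hDs0 : PowerSeries.coeff (R := Module.End k A) 0 Ds = 1)
    (hLeib : ∀ n ≤ m, ∀ x y : A,
      PowerSeries.coeff (R := Module.End k A) n D (x * y) =
        ∑ z ∈ Finset.HasAntidiagonal.antidiagonal n,
          (PowerSeries.coeff (R := Module.End k A) z.1 D x) *
            (PowerSeries.coeff (R := Module.End k A) z.2 D y))
    (hinv1 : ∀ n ≤ m, PowerSeries.coeff (R := Module.End k A) n (D * Ds) =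
      PowerSeries.coeff (R := Module.End k A) n 1)
    (hinv2 : ∀ n ≤ m, PowerSeries.coeff (R := Module.End k A) n (Ds * D) =
      PowerSeries.coeff (R := Module.End k A) n 1) :
    (PowerSeries.coeff (R := Module.End k A) 1 (Ds * chi1 D) =
        PowerSeries.coeff (R := Module.End k A) 1 D) ∧
    (PowerSeries.coeff (R := Module.End k A) 2 (Ds * chi1 D) =
        2 • PowerSeries.coeff (R := Module.End k A) 2 D -
          PowerSeries.coeff (R := Module.End k A) 1 D *
            PowerSeries.coeff (R := Module.End k A) 1 D) ∧
    (PowerSeries.coeff (R := Module.End k A) 3 (Ds * chi1 D) =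
        3 • PowerSeries.coeff (R := Module.End k A) 3 D -
          2 • (PowerSeries.coeff (R := Module.End k A) 1 D *
            PowerSeries.coeff (R := Module.End k A) 2 D) -
          PowerSeries.coeff (R := Module.End k A) 2 D *
            PowerSeries.coeff (R := Module.End k A) 1 D +
          PowerSeries.coeff (R := Module.End k A) 1 D *
            PowerSeries.coeff (R := Module.End k A) 1 D *
            PowerSeries.coeff (R := Module.End k A) 1 D) ∧
    (∀ n : ℕ, n = 1 ∨ n = 2 ∨ n = 3 → ∀ x y : A,
        PowerSeries.coeff (R := Module.End k A) n (Ds * chi1 D) (x * y) =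
          x * PowerSeries.coeff (R := Module.End k A) n (Ds * chi1 D) y +
            PowerSeries.coeff (R := Module.End k A) n (Ds * chi1 D) x * y) :=
  eps_low_components_general m hm D Ds hD0 hDs0 hLeib hinv2
end

section
/- The map ξ : Der_k(A)[[s]]_{Δ,+} → HS^{p+1}_k(A; Δ × {0,1}) sending δ = Σ_{|α|>0} δ_α s^α to 1 + Σ_{|α|>0} δ_α s^α τ is a well-defined injective group homomorphism from the additive group of zero-constant-term derivation-valued series to the group of (p+1)-variate Hasse–Schmidt derivations with respect to the co-ideal Δ × {0,1}. -/
/-!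
In `τ`-degree `0` the family `ξ(δ)` is the unit `(1, 0, 0, …)`, and it vanishes in `τ`-degrees
`≥ 2`. Hence in every convolution up to `τ`-degree `1` one factor is the unit in each nonzero
term, and the sum collapses: in `τ`-degree `1` the Hasse–Schmidt–Leibniz identity for `ξ(δ)` at
`(α, 1)` becomes the Leibniz rule for `δ_α`, and the product `ξ(δ) ξ(η)` becomes `δ_α + η_α`.
Injectivity is read off the `τ`-degree `1` component.
-/

open scoped Classical

/-- The map `ξ` sending `δ = Σ_{|α|>0} δ_α s^α` to `1 + Σ δ_α s^α τ`, as a family of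
endomorphisms indexed by `(α, j) ∈ ℕ^p × ℕ` (with `j` the `τ`-degree). -/
noncomputable def xiF {p : ℕ} {k A : Type*} [CommRing k] [CommRing A] [Algebra k A]
    (δ : (Fin p →₀ ℕ) → Module.End k A) : (Fin p →₀ ℕ) × ℕ → Module.End k A :=
  fun x => if x.2 = 0 then (if x.1 = 0 then 1 else 0)
    else if x.2 = 1 then δ x.1 else 0

/-- The convolution product of families indexed by `(Fin p →₀ ℕ) × ℕ`. -/
noncomputable def conv2 {p : ℕ} {k A : Type*} [CommRing k] [CommRing A] [Algebra k A]
    (F G : (Fin p →₀ ℕ) × ℕ → Module.End k A) (x : (Fin p →₀ ℕ) × ℕ) :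
    Module.End k A :=
  ∑ y ∈ Finset.HasAntidiagonal.antidiagonal x.1, ∑ z ∈ Finset.HasAntidiagonal.antidiagonal x.2,
    F (y.1, z.1) * G (y.2, z.2)

namespace Finset.HasAntidiagonal

variable {M N : Type*} [AddMonoid M] [HasAntidiagonal M] [AddCommMonoid N]

theorem sum_antidiagonal_ite_fst_eq_zero (α : M) (g : M → N) :
    ∑ y ∈ antidiagonal α, (if y.1 = 0 then g y.2 else 0) = g α := by
  rw [sum_eq_single_of_mem (0, α) (by simp)]
  · simp
  · rintro ⟨y₁, y₂⟩ hy hne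
    rw [mem_antidiagonal] at hy
    rw [if_neg]
    rintro rfl
    exact hne (by rw [← hy, zero_add])

theorem sum_antidiagonal_ite_snd_eq_zero (α : M) (g : M → N) :
    ∑ y ∈ antidiagonal α, (if y.2 = 0 then g y.1 else 0) = g α := by
  rw [sum_eq_single_of_mem (α, 0) (by simp)]
  · simp
  · rintro ⟨y₁, y₂⟩ hy hne
    rw [mem_antidiagonal] at hy
    rw [if_neg]
    rintro rfl
    exact hne (by rw [← hy, add_zero])

end Finset.HasAntidiagonal

open Finset Finset.HasAntidiagonal

section Xi

variable {p : ℕ} {k A N : Type*} [CommRing k] [CommRing A] [Algebra k A] [AddCommMonoid N]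
  (δ η : (Fin p →₀ ℕ) → Module.End k A)

theorem xiF_snd_zero (α : Fin p →₀ ℕ) : xiF δ (α, 0) = if α = 0 then 1 else 0 := rfl

theorem xiF_snd_one (α : Fin p →₀ ℕ) : xiF δ (α, 1) = δ α := rfl

variable {δ η} {B : Module.End k A → Module.End k A → N}

-- `B` will be composition or `(f, g) ↦ f a * g b`; collapsing the sums only needs `B` to vanish
-- when either argument is `0`.

theorem sum_antidiagonal_xiF_snd_zero (hB₁ : ∀ g, B 0 g = 0) (hB₂ : ∀ f, B f 0 = 0)
    (α : Fin p →₀ ℕ) :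
    ∑ y ∈ antidiagonal α, ∑ z ∈ antidiagonal 0, B (xiF δ (y.1, z.1)) (xiF η (y.2, z.2)) =
      if α = 0 then B 1 1 else 0 := by
  simp only [Nat.antidiagonal_zero, sum_singleton, xiF_snd_zero]
  rw [← sum_antidiagonal_ite_fst_eq_zero α fun β => if β = 0 then B 1 1 else 0]
  refine sum_congr rfl fun y _ => ?_
  split_ifs <;> simp [hB₁, hB₂]

theorem sum_antidiagonal_xiF_snd_one (hB₁ : ∀ g, B 0 g = 0) (hB₂ : ∀ f, B f 0 = 0)
    (α : Fin p →₀ ℕ) :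
    ∑ y ∈ antidiagonal α, ∑ z ∈ antidiagonal 1, B (xiF δ (y.1, z.1)) (xiF η (y.2, z.2)) =
      B 1 (η α) + B (δ α) 1 := by
  simp only [Nat.sum_antidiagonal_succ, Nat.antidiagonal_zero, sum_singleton, zero_add,
    xiF_snd_zero, xiF_snd_one, sum_add_distrib]
  rw [← sum_antidiagonal_ite_fst_eq_zero α fun β => B 1 (η β),
    ← sum_antidiagonal_ite_snd_eq_zero α fun β => B (δ β) 1]
  congr 1 <;> refine sum_congr rfl fun y _ => ?_ <;> split_ifs <;> simp [hB₁, hB₂]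

theorem xiF_map_mul {α : Fin p →₀ ℕ} {j : ℕ} (hj : j ≤ 1)
    (hδ : ∀ a b : A, δ α (a * b) = a * δ α b + δ α a * b) (a b : A) :
    xiF δ (α, j) (a * b) = ∑ y ∈ antidiagonal α, ∑ z ∈ antidiagonal j,
      xiF δ (y.1, z.1) a * xiF δ (y.2, z.2) b := by
  interval_cases j
  · rw [sum_antidiagonal_xiF_snd_zero (B := fun f g => f a * g b) (by simp) (by simp),
      xiF_snd_zero]
    split_ifs <;> simp
  · rw [sum_antidiagonal_xiF_snd_one (B := fun f g => f a * g b) (by simp) (by simp),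
      xiF_snd_one, hδ]
    simp

theorem conv2_xiF {x : (Fin p →₀ ℕ) × ℕ} (hx : x.2 ≤ 1) :
    conv2 (xiF δ) (xiF η) x = xiF (δ + η) x := by
  obtain ⟨α, j⟩ := x
  interval_cases j
  · rw [conv2, sum_antidiagonal_xiF_snd_zero (B := (· * ·)) zero_mul mul_zero, xiF_snd_zero,
      mul_one]
  · rw [conv2, sum_antidiagonal_xiF_snd_one (B := (· * ·)) zero_mul mul_zero, xiF_snd_one,
      one_mul, mul_one, add_comm, Pi.add_apply]

end Xi

theorem xi_injective_group_hom_general {p : ℕ} {k A : Type*} [CommRing k] [CommRing A]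
    [Algebra k A]
    (Δ : Set (Fin p →₀ ℕ))
    (δ η : (Fin p →₀ ℕ) → Module.End k A)
    (hδder : ∀ α ∈ Δ, ∀ x y : A, δ α (x * y) = x * δ α y + δ α x * y) :
    -- ξ(δ) is a Hasse–Schmidt derivation on the co-ideal Δ × {0,1}
    (xiF δ (0, 0) = 1 ∧
      ∀ x : (Fin p →₀ ℕ) × ℕ, x.1 ∈ Δ → x.2 ≤ 1 → ∀ a b : A,
        xiF δ x (a * b) =
          ∑ y ∈ Finset.HasAntidiagonal.antidiagonal x.1, ∑ z ∈ Finset.HasAntidiagonal.antidiagonal x.2,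
            (xiF δ (y.1, z.1) a) * (xiF δ (y.2, z.2) b)) ∧
    -- ξ is a group homomorphism: ξ(δ + η) = ξ(δ) ∘ ξ(η)
    (∀ x : (Fin p →₀ ℕ) × ℕ, x.1 ∈ Δ → x.2 ≤ 1 →
      conv2 (xiF δ) (xiF η) x = xiF (fun α => δ α + η α) x) ∧
    -- ξ is injective
    ((∀ x : (Fin p →₀ ℕ) × ℕ, x.1 ∈ Δ → x.2 ≤ 1 → xiF δ x = xiF η x) →
      ∀ α ∈ Δ, δ α = η α) := by
  refine ⟨⟨rfl, fun ⟨α, j⟩ hα hj => xiF_map_mul hj (hδder α hα)⟩,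
    fun _ _ hj => conv2_xiF hj, fun h α hα => ?_⟩
  simpa only [xiF_snd_one] using h (α, 1) hα le_rfl

/-- `ξ : Der_k(A)[[s]]_{Δ,+} → HS^{p+1}_k(A; Δ×{0,1})`, `δ ↦ 1 + δ τ`, is a well-defined
injective group homomorphism (from the additive group of derivation-valued series with
zero constant term to the group of `(p+1)`-variate HS-derivations on `Δ × {0,1}`). -/
theorem xi_injective_group_hom {p : ℕ} {k A : Type*} [CommRing k] [CommRing A]
    [Algebra k A]
    (Δ : Set (Fin p →₀ ℕ)) (hΔ : IsCoideal Δ)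
    (δ η : (Fin p →₀ ℕ) → Module.End k A)
    (hδ0 : δ 0 = 0) (hη0 : η 0 = 0)
    (hδder : ∀ α ∈ Δ, ∀ x y : A, δ α (x * y) = x * δ α y + δ α x * y)
    (hηder : ∀ α ∈ Δ, ∀ x y : A, η α (x * y) = x * η α y + η α x * y) :
    -- ξ(δ) is a Hasse–Schmidt derivation on the co-ideal Δ × {0,1}
    (xiF δ (0, 0) = 1 ∧
      ∀ x : (Fin p →₀ ℕ) × ℕ, x.1 ∈ Δ → x.2 ≤ 1 → ∀ a b : A,
        xiF δ x (a * b) =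
          ∑ y ∈ Finset.HasAntidiagonal.antidiagonal x.1, ∑ z ∈ Finset.HasAntidiagonal.antidiagonal x.2,
            (xiF δ (y.1, z.1) a) * (xiF δ (y.2, z.2) b)) ∧
    -- ξ is a group homomorphism: ξ(δ + η) = ξ(δ) ∘ ξ(η)
    (∀ x : (Fin p →₀ ℕ) × ℕ, x.1 ∈ Δ → x.2 ≤ 1 →
      conv2 (xiF δ) (xiF η) x = xiF (fun α => δ α + η α) x) ∧
    -- ξ is injective
    ((∀ x : (Fin p →₀ ℕ) × ℕ, x.1 ∈ Δ → x.2 ≤ 1 → xiF δ x = xiF η x) →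
      ∀ α ∈ Δ, δ α = η α) :=
  xi_injective_group_hom_general Δ δ η hδder
end

section
/- Let σ : A[[s]]_Δ → A[[s,τ]]_{Δ×{0,1}} be the substitution map with constant coefficients determined by s_i ↦ s_i + s_i τ. Then for any r ∈ U^p(R;Δ), the identity r* (σ • r) = ξ(ε(r)) holds in U^{p+1}(R; Δ×{0,1}), where ε(r) = r* χ_R(r) is the Euler logarithmic derivative and ξ(δ) = 1 + δ τ. Equivalently, σ • r = r + χ_R(r) τ. -/
open scoped Classical

/-- The Euler derivation `χ`, acting coefficientwise by `|α|`. -/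
noncomputable def chiE {p : ℕ} {R : Type*} [Ring R]
    (f : MvPowerSeries (Fin p) R) : MvPowerSeries (Fin p) R :=
  fun α => (∑ i, α i) • MvPowerSeries.coeff α f

/-- The action `σ • r` of the substitution map `σ : s_i ↦ s_i + s_i τ` on
`r = Σ r_α s^α`: since `σ(s^α) = s^α (1+τ)^{|α|}`, the coefficient of `s^β τ^j` is
`C(|β|, j) r_β`. -/
noncomputable def sigmaAct {p : ℕ} {R : Type*} [Ring R]
    (r : MvPowerSeries (Fin p) R) : (Fin p →₀ ℕ) × ℕ → R :=
  fun x => (Nat.choose (∑ i, x.1 i) x.2) • MvPowerSeries.coeff x.1 r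

/-- The inclusion `ι : R[[s]]_Δ → R[[s,τ]]_{Δ×{0,1}}`. -/
noncomputable def iotaAct {p : ℕ} {R : Type*} [Ring R]
    (r : MvPowerSeries (Fin p) R) : (Fin p →₀ ℕ) × ℕ → R :=
  fun x => if x.2 = 0 then MvPowerSeries.coeff x.1 r else 0

/-!
Since `σ(s^α) = s^α (1 + τ)^{|α|}`, modulo `τ²` the series `σ • r` is `r + χ(r) τ`.
Multiplying by `ι(r*)`, which is constant in `τ`, yields `r* r = 1` in `τ`-degree `0`
and `r* χ(r) = ε(r)` in `τ`-degree `1`.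
-/

section

variable {p : ℕ} {R : Type*} [Ring R]

theorem coeff_chiE (f : MvPowerSeries (Fin p) R) (α : Fin p →₀ ℕ) :
    MvPowerSeries.coeff α (chiE f) = (∑ i, α i) • MvPowerSeries.coeff α f :=
  rfl

theorem sigmaAct_zero (r : MvPowerSeries (Fin p) R) (α : Fin p →₀ ℕ) :
    sigmaAct r (α, 0) = MvPowerSeries.coeff α r := by
  simp [sigmaAct]

theorem sigmaAct_one (r : MvPowerSeries (Fin p) R) (α : Fin p →₀ ℕ) :
    sigmaAct r (α, 1) = MvPowerSeries.coeff α (chiE r) := by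
  simp [sigmaAct, coeff_chiE]

-- `ι(rs)` is constant in `τ`, so only the `τ^n`-coefficients of `g` contribute.
theorem sum_antidiagonal_iotaAct_mul (rs : MvPowerSeries (Fin p) R)
    (g : (Fin p →₀ ℕ) × ℕ → R) (α : Fin p →₀ ℕ) (n : ℕ) :
    ∑ y ∈ Finset.HasAntidiagonal.antidiagonal α, ∑ z ∈ Finset.HasAntidiagonal.antidiagonal n,
        iotaAct rs (y.1, z.1) * g (y.2, z.2) =
      ∑ y ∈ Finset.HasAntidiagonal.antidiagonal α, MvPowerSeries.coeff y.1 rs * g (y.2, n) := by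
  refine Finset.sum_congr rfl fun y _ => ?_
  rw [Finset.Nat.sum_antidiagonal_eq_sum_range_succ_mk, Finset.sum_range_succ']
  simp [iotaAct]

end

theorem sigma_bullet_eq_xi_eps_general {p : ℕ} {R : Type*} [Ring R]
    (Δ : Set (Fin p →₀ ℕ))
    (r rs : MvPowerSeries (Fin p) R)
    (hr2 : EqOnD Δ (rs * r) 1) :
    ∀ x : (Fin p →₀ ℕ) × ℕ, x.1 ∈ Δ → x.2 ≤ 1 →
      -- σ • r = r + χ_R(r) τ
      (sigmaAct r x =
        (if x.2 = 0 then MvPowerSeries.coeff x.1 r else 0) +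
          (if x.2 = 1 then (∑ i, x.1 i) • MvPowerSeries.coeff x.1 r else 0)) ∧
      -- r* (σ • r) = ξ(ε(r))
      ((∑ y ∈ Finset.HasAntidiagonal.antidiagonal x.1, ∑ z ∈ Finset.HasAntidiagonal.antidiagonal x.2,
          iotaAct rs (y.1, z.1) * sigmaAct r (y.2, z.2)) =
        (if x.2 = 0 then (if x.1 = 0 then (1 : R) else 0)
          else MvPowerSeries.coeff x.1 (rs * chiE r))) := by
  rintro ⟨α, n⟩ (hα : α ∈ Δ) (hn : n ≤ 1)
  simp only [sum_antidiagonal_iotaAct_mul]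
  interval_cases n
  · refine ⟨by simp [sigmaAct_zero], ?_⟩
    simp only [sigmaAct_zero, ← MvPowerSeries.coeff_mul, hr2 α hα, MvPowerSeries.coeff_one]
    simp
  · refine ⟨by simp [sigmaAct_one, coeff_chiE], ?_⟩
    simp only [sigmaAct_one, ← MvPowerSeries.coeff_mul]
    simp

/-- For `r ∈ U^p(R;Δ)` with inverse `rs`, in `R[[s,τ]]_{Δ×{0,1}}` one has
`σ • r = r + χ_R(r) τ` and `r* (σ • r) = ξ(ε(r))`, where `ε(r) = r* χ_R(r)` and
`ξ(δ) = 1 + δ τ`. -/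
theorem sigma_bullet_eq_xi_eps {p : ℕ} {R : Type*} [Ring R]
    (Δ : Set (Fin p →₀ ℕ)) (hΔ : IsCoideal Δ)
    (r rs : MvPowerSeries (Fin p) R)
    (hr0 : MvPowerSeries.coeff 0 r = 1)
    (hr1 : EqOnD Δ (r * rs) 1) (hr2 : EqOnD Δ (rs * r) 1) :
    ∀ x : (Fin p →₀ ℕ) × ℕ, x.1 ∈ Δ → x.2 ≤ 1 →
      -- σ • r = r + χ_R(r) τ
      (sigmaAct r x =
        (if x.2 = 0 then MvPowerSeries.coeff x.1 r else 0) +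
          (if x.2 = 1 then (∑ i, x.1 i) • MvPowerSeries.coeff x.1 r else 0)) ∧
      -- r* (σ • r) = ξ(ε(r))
      ((∑ y ∈ Finset.HasAntidiagonal.antidiagonal x.1, ∑ z ∈ Finset.HasAntidiagonal.antidiagonal x.2,
          iotaAct rs (y.1, z.1) * sigmaAct r (y.2, z.2)) =
        (if x.2 = 0 then (if x.1 = 0 then (1 : R) else 0)
          else MvPowerSeries.coeff x.1 (rs * chiE r))) :=
  sigma_bullet_eq_xi_eps_general Δ r rs hr2
end

section
/- Let φ : A[[s]]_Δ → A[[t]]_∇ be a substitution map and D ∈ HS^p_k(A;Δ) a Hasse–Schmidt derivation. Then φ • D := Σ_{α∈Δ} φ(s^α) D_α is a (q,∇)-variate Hasse–Schmidt derivation of A over k, and Φ_{φ•D} = φ ∘ Φ_D as k-algebra maps A → A[[t]]_∇. -/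
open scoped Classical

def IsHS {p : ℕ} {k A : Type*} [CommRing k] [CommRing A] [Algebra k A]
    (Δ : Set (Fin p →₀ ℕ)) (D : MvPowerSeries (Fin p) (Module.End k A)) : Prop :=
  MvPowerSeries.coeff 0 D = 1 ∧
    ∀ α ∈ Δ, ∀ x y : A,
      MvPowerSeries.coeff α D (x * y) =
        ∑ z ∈ Finset.HasAntidiagonal.antidiagonal α,
          (MvPowerSeries.coeff z.1 D x) *
            (MvPowerSeries.coeff z.2 D y)

/-- The finite set of exponents `α ∈ ℕ^p` with `|α| ≤ N`. -/
noncomputable def expBdd (p N : ℕ) : Finset (Fin p →₀ ℕ) :=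
  (Finset.Iic (Finsupp.equivFunOnFinite.symm (fun _ : Fin p => N))).filter
    (fun α => ∑ i, α i ≤ N)

/-- `φ • D`, the action of the substitution map `φ` on the HS-derivation `D`:
`(φ • D)_e = Σ_{|α| ≤ |e|} C_e(φ,α) D_α` where `C_e(φ,α)` is the coefficient of `t^e`
in `φ(s^α)`, acting on `End_k(A)` by left multiplication. -/
noncomputable def substAct {p q : ℕ} {k A : Type*} [CommRing k] [CommRing A]
    [Algebra k A]
    (φ : MvPowerSeries (Fin p) A →ₐ[A] MvPowerSeries (Fin q) A)
    (D : MvPowerSeries (Fin p) (Module.End k A)) :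
    MvPowerSeries (Fin q) (Module.End k A) :=
  fun e => ∑ α ∈ expBdd p (∑ j, e j),
    LinearMap.mulLeft k
        (MvPowerSeries.coeff e (φ (MvPowerSeries.monomial α (1 : A)))) *
      MvPowerSeries.coeff α D

/-! By continuity of `φ`, evaluating `(φ • D)_e` at `a` gives the `t^e`-coefficient of `φ(Φ_D(a))`, so
`Φ_{φ•D} = φ ∘ Φ_D`. The Leibniz rule for `D` on `Δ` says `Φ_D(xy) ≡ Φ_D(x) Φ_D(y)` modulo the
coefficients outside `Δ`; `φ` carries this congruence to one modulo `∇` and is multiplicative,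
which is the Leibniz rule for `φ • D` on `∇`. -/

open MvPowerSeries

lemma expBdd_zero (p : ℕ) : expBdd p 0 = {0} := by
  ext α
  simp only [expBdd, Finset.mem_filter, Finset.mem_Iic, Finset.mem_singleton,
    Nat.le_zero, Finset.sum_eq_zero_iff, Finset.mem_univ, true_implies]
  constructor
  · rintro ⟨-, h⟩
    ext i
    exact h i
  · rintro rfl
    exact ⟨fun _ => Nat.zero_le _, fun _ => rfl⟩

section

variable {p q : ℕ} {k A : Type*} [CommRing k] [CommRing A] [Algebra k A]

/-- `Φ_D(a) = Σ_α D_α(a) s^α`. -/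
def seriesApply (D : MvPowerSeries (Fin p) (Module.End k A)) (a : A) : MvPowerSeries (Fin p) A :=
  fun α => coeff α D a

lemma coeff_zero_substAct (φ : MvPowerSeries (Fin p) A →ₐ[A] MvPowerSeries (Fin q) A)
    {D : MvPowerSeries (Fin p) (Module.End k A)} (hD : coeff 0 D = 1) :
    coeff 0 (substAct φ D) = 1 := by
  change substAct φ D 0 = 1
  simp only [substAct, Finsupp.coe_zero, Pi.zero_apply, Finset.sum_const_zero, expBdd_zero,
    Finset.sum_singleton, monomial_zero_eq_C, map_one, coeff_zero_one, LinearMap.mulLeft_one]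
  exact hD

lemma coeff_substAct_apply (φ : MvPowerSeries (Fin p) A →ₐ[A] MvPowerSeries (Fin q) A)
    (hcont : ∀ (f : MvPowerSeries (Fin p) A) (e : Fin q →₀ ℕ),
      coeff e (φ f) = ∑ α ∈ expBdd p (∑ j, e j), coeff α f * coeff e (φ (monomial α (1 : A))))
    (D : MvPowerSeries (Fin p) (Module.End k A)) (a : A) (e : Fin q →₀ ℕ) :
    coeff e (substAct φ D) a = coeff e (φ (seriesApply D a)) := by
  rw [hcont]
  change (substAct φ D e) a = _
  simp only [substAct, LinearMap.sum_apply, Module.End.mul_apply, LinearMap.mulLeft_apply]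
  exact Finset.sum_congr rfl fun α _ => mul_comm _ _

lemma IsHS.eqOnD_seriesApply_mul {Δ : Set (Fin p →₀ ℕ)}
    {D : MvPowerSeries (Fin p) (Module.End k A)} (hD : IsHS Δ D) (x y : A) :
    EqOnD Δ (seriesApply D (x * y)) (seriesApply D x * seriesApply D y) := by
  intro α hα
  rw [coeff_mul]
  exact hD.2 α hα x y

end

theorem substAct_isHS_general {p q : ℕ} {k A : Type*} [CommRing k] [CommRing A] [Algebra k A]
    (Δ : Set (Fin p →₀ ℕ)) (nab : Set (Fin q →₀ ℕ))
    (φ : MvPowerSeries (Fin p) A →ₐ[A] MvPowerSeries (Fin q) A)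
    (hcont : ∀ (f : MvPowerSeries (Fin p) A) (e : Fin q →₀ ℕ),
      MvPowerSeries.coeff e (φ f) =
        ∑ α ∈ expBdd p (∑ j, e j),
          MvPowerSeries.coeff α f *
            MvPowerSeries.coeff e (φ (MvPowerSeries.monomial α (1 : A))))
    (hcong : ∀ f g, EqOnD Δ f g → EqOnD nab (φ f) (φ g))
    (D : MvPowerSeries (Fin p) (Module.End k A)) (hD : IsHS Δ D) :
    IsHS nab (substAct φ D) ∧
      ∀ (a : A), ∀ e ∈ nab,
        MvPowerSeries.coeff e (substAct φ D) a =
          MvPowerSeries.coeff e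
            (φ (show MvPowerSeries (Fin p) A from
              fun α => MvPowerSeries.coeff α D a)) := by
  have key := coeff_substAct_apply φ hcont D
  refine ⟨⟨coeff_zero_substAct φ hD.1, fun e he x y => ?_⟩, fun a e _ => key a e⟩
  calc coeff e (substAct φ D) (x * y)
      = coeff e (φ (seriesApply D (x * y))) := key _ _
    _ = coeff e (φ (seriesApply D x) * φ (seriesApply D y)) := by
        rw [← map_mul]; exact hcong _ _ (hD.eqOnD_seriesApply_mul x y) e he
    _ = ∑ z ∈ Finset.HasAntidiagonal.antidiagonal e,
          coeff z.1 (substAct φ D) x * coeff z.2 (substAct φ D) y := by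
        rw [coeff_mul]
        exact Finset.sum_congr rfl fun z _ => by rw [key x z.1, key y z.2]

/-- Let `φ : A[[s]]_Δ → A[[t]]_∇` be a substitution map (an `A`-algebra map with
`ord φ(s_i) ≥ 1`, continuous and compatible with the truncations) and
`D ∈ HS^p_k(A;Δ)`. Then `φ • D ∈ HS^q_k(A;∇)` and `Φ_{φ•D} = φ ∘ Φ_D`. -/
theorem substAct_isHS {p q : ℕ} {k A : Type*} [CommRing k] [CommRing A] [Algebra k A]
    (Δ : Set (Fin p →₀ ℕ)) (nab : Set (Fin q →₀ ℕ))
    (hΔ : IsCoideal Δ) (hnab : IsCoideal nab)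
    (φ : MvPowerSeries (Fin p) A →ₐ[A] MvPowerSeries (Fin q) A)
    (hord : ∀ i : Fin p,
      MvPowerSeries.constantCoeff (φ (MvPowerSeries.X i)) = 0)
    (hcont : ∀ (f : MvPowerSeries (Fin p) A) (e : Fin q →₀ ℕ),
      MvPowerSeries.coeff e (φ f) =
        ∑ α ∈ expBdd p (∑ j, e j),
          MvPowerSeries.coeff α f *
            MvPowerSeries.coeff e (φ (MvPowerSeries.monomial α (1 : A))))
    (hcong : ∀ f g, EqOnD Δ f g → EqOnD nab (φ f) (φ g))
    (D : MvPowerSeries (Fin p) (Module.End k A)) (hD : IsHS Δ D) :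
    IsHS nab (substAct φ D) ∧
      ∀ (a : A), ∀ e ∈ nab,
        MvPowerSeries.coeff e (substAct φ D) a =
          MvPowerSeries.coeff e
            (φ (show MvPowerSeries (Fin p) A from
              fun α => MvPowerSeries.coeff α D a)) :=
  substAct_isHS_general Δ nab φ hcont hcong D hD
end
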